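/- Let P ⊆ ℝ^d be a full-dimensional lattice polytope with codegree a satisfying P = ⌊aP⌋ + {P}. If the floor polytope ⌊aP⌋ is a single point {u}, then aP − u is a reflexive polytope; in particular, P is Gorenstein. -/

import Mathlib

open Set Pointwise

/-- The set of lattice points of `ℝ^d`. -/
def latticePoints (d : ℕ) : Set (Fin d → ℝ) :=
  {x | ∀ i, ∃ z : ℤ, x i = (z : ℝ)}

/-- A lattice polytope: the convex hull of a finite set of lattice points. -/
def IsLatticePolytope {d : ℕ} (P : Set (Fin d → ℝ)) : Prop :=
  ∃ V : Finset (Fin d → ℝ), (V : Set (Fin d → ℝ)) ⊆ latticePoints d ∧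
    P = convexHull ℝ (V : Set (Fin d → ℝ))

/-- The natural pairing of an integral linear functional with a point of `ℝ^d`. -/
def pairing {d : ℕ} (n : Fin d → ℤ) (x : Fin d → ℝ) : ℝ :=
  ∑ i, (n i : ℝ) * x i

/-- `P = {x | n_F(x) ≥ -h_F}` is an irredundant presentation with primitive
integral inner normals, i.e. the facet presentation of `P`. -/
def IsFacetPresentation {d m : ℕ} (P : Set (Fin d → ℝ))
    (n : Fin m → Fin d → ℤ) (h : Fin m → ℤ) : Prop :=
  P = {x | ∀ i, pairing (n i) x ≥ -(h i : ℝ)} ∧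
  (∀ i, Finset.univ.gcd (n i) = 1) ∧
  (∀ i, ∃ x : Fin d → ℝ, pairing (n i) x < -(h i : ℝ) ∧
    ∀ j, j ≠ i → pairing (n j) x ≥ -(h j : ℝ))

/-- `a` is the codegree of `P`: the least `k ≥ 1` such that `int(kP)` contains
a lattice point. -/
def IsCodegree {d : ℕ} (P : Set (Fin d → ℝ)) (a : ℕ) : Prop :=
  1 ≤ a ∧ (interior ((a : ℝ) • P) ∩ latticePoints d).Nonempty ∧
    ∀ k : ℕ, 1 ≤ k → (interior ((k : ℝ) • P) ∩ latticePoints d).Nonempty → a ≤ k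

/-- The floor polytope `⌊R⌋ = conv(int(R) ∩ ℤ^d)`. -/
def floorPoly {d : ℕ} (R : Set (Fin d → ℝ)) : Set (Fin d → ℝ) :=
  convexHull ℝ (interior R ∩ latticePoints d)

/-- The remainder polytope `{P} = conv{x ∈ ℤ^d | n_F(x) ≥ (a-1)h_F - 1}`,
defined in terms of the facet presentation data and the codegree `a`. -/
def remPoly {d m : ℕ} (n : Fin m → Fin d → ℤ) (h : Fin m → ℤ) (a : ℕ) :
    Set (Fin d → ℝ) :=
  convexHull ℝ {x | x ∈ latticePoints d ∧
    ∀ i, pairing (n i) x ≥ ((a : ℝ) - 1) * (h i : ℝ) - 1}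

/-- The cone `C_P ⊆ ℝ^d × ℝ` over `P`, in terms of the facet presentation. -/
def coneOver {d m : ℕ} (n : Fin m → Fin d → ℤ) (h : Fin m → ℤ) :
    Set ((Fin d → ℝ) × ℝ) :=
  {p | ∀ i, pairing (n i) p.1 ≥ -(p.2 * (h i : ℝ))}

/-- The interior `int(C_P)` of the cone over `P`. -/
def intCone {d m : ℕ} (n : Fin m → Fin d → ℤ) (h : Fin m → ℤ) :
    Set ((Fin d → ℝ) × ℝ) :=
  {p | ∀ i, pairing (n i) p.1 > -(p.2 * (h i : ℝ))}

/-- The anticanonical set `ant(C_P)` of the cone over `P`. -/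
def antCone {d m : ℕ} (n : Fin m → Fin d → ℤ) (h : Fin m → ℤ) :
    Set ((Fin d → ℝ) × ℝ) :=
  {p | ∀ i, pairing (n i) p.1 ≥ -(p.2 * (h i : ℝ)) - 1}

/-- Lattice points of `ℝ^d × ℝ = ℝ^{d+1}`. -/
def latticePairs (d : ℕ) : Set ((Fin d → ℝ) × ℝ) :=
  {p | p.1 ∈ latticePoints d ∧ ∃ z : ℤ, p.2 = (z : ℝ)}

/-- The nearly Gorenstein condition with respect to a given facet presentation:
`(C_P ∩ ℤ^{d+1}) \ {0} ⊆ (int(C_P) ∩ ℤ^{d+1}) + (ant(C_P) ∩ ℤ^{d+1})`. -/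
def NGIncl {d m : ℕ} (n : Fin m → Fin d → ℤ) (h : Fin m → ℤ) : Prop :=
  (coneOver n h ∩ latticePairs d) \ {(0 : (Fin d → ℝ) × ℝ)} ⊆
    (intCone n h ∩ latticePairs d) + (antCone n h ∩ latticePairs d)

/-- A full-dimensional lattice polytope is nearly Gorenstein if the nearly
Gorenstein inclusion holds for its facet presentation. -/
def NearlyGorenstein {d : ℕ} (P : Set (Fin d → ℝ)) : Prop :=
  ∃ (m : ℕ) (n : Fin m → Fin d → ℤ) (h : Fin m → ℤ),
    IsFacetPresentation P n h ∧ NGIncl n h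

/-- The polar dual `Q* = {y | y(x) ≥ -1 for all x ∈ Q}`. -/
def polarDual {d : ℕ} (Q : Set (Fin d → ℝ)) : Set (Fin d → ℝ) :=
  {y | ∀ x ∈ Q, (∑ i, y i * x i) ≥ -1}

/-- A reflexive polytope: a lattice polytope with `0` in its interior whose
polar dual is again a lattice polytope. -/
def IsReflexive {d : ℕ} (Q : Set (Fin d → ℝ)) : Prop :=
  IsLatticePolytope Q ∧ (0 : Fin d → ℝ) ∈ interior Q ∧
    IsLatticePolytope (polarDual Q)

/-- A Gorenstein polytope: some dilate `kP`, translated by a lattice vector,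
is reflexive. -/
def IsGorenstein {d : ℕ} (P : Set (Fin d → ℝ)) : Prop :=
  ∃ (k : ℕ) (w : Fin d → ℝ), 1 ≤ k ∧ w ∈ latticePoints d ∧
    IsReflexive ((fun x => x - w) '' ((k : ℝ) • P))

/-- The integer decomposition property. -/
def IsIDP {d : ℕ} (P : Set (Fin d → ℝ)) : Prop :=
  ∀ k : ℕ, 1 ≤ k → ∀ x ∈ ((k : ℝ) • P) ∩ latticePoints d,
    ∃ y : Fin k → Fin d → ℝ, (∀ j, y j ∈ P ∩ latticePoints d) ∧ x = ∑ j, y j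

/-- Minkowski indecomposability of a lattice polytope. -/
def IsIndecomposable {d : ℕ} (P : Set (Fin d → ℝ)) : Prop :=
  (¬ ∃ p : Fin d → ℝ, P = {p}) ∧
  ∀ P₁ P₂ : Set (Fin d → ℝ), IsLatticePolytope P₁ → IsLatticePolytope P₂ →
    P = P₁ + P₂ → (∃ p, P₁ = {p}) ∨ (∃ p, P₂ = {p})

/-- A `(0,1)`-polytope: the convex hull of a set of `(0,1)`-vectors. -/
def Is01Polytope {d : ℕ} (P : Set (Fin d → ℝ)) : Prop :=
  ∃ V : Finset (Fin d → ℝ), (∀ v ∈ V, ∀ i, v i = 0 ∨ v i = 1) ∧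
    P = convexHull ℝ (V : Set (Fin d → ℝ))

/-! Let `u` be the unique interior lattice point of `aP`. For every facet `F`, a point `p` of `P`
on `F` splits as `p = u + r` with `r ∈ {P}`, which bounds `n_F(u) ≤ 1 - a h_F`; since `u` is
interior, `n_F(u) > -a h_F`, and integrality forces `n_F(u) = 1 - a h_F`. Hence
`aP - u = {z | n_F(z) ≥ -1}`, whose polar dual is the lattice polytope `conv(0, n_F)`. -/

open Filter Topology

lemma pairing_add {d : ℕ} (v : Fin d → ℤ) (x y : Fin d → ℝ) :
    pairing v (x + y) = pairing v x + pairing v y := dotProduct_add _ _ _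

lemma pairing_sub {d : ℕ} (v : Fin d → ℤ) (x y : Fin d → ℝ) :
    pairing v (x - y) = pairing v x - pairing v y := dotProduct_sub _ _ _

lemma pairing_smul {d : ℕ} (v : Fin d → ℤ) (c : ℝ) (x : Fin d → ℝ) :
    pairing v (c • x) = c * pairing v x := dotProduct_smul _ _ _

lemma isLinearMap_pairing {d : ℕ} (v : Fin d → ℤ) : IsLinearMap ℝ (pairing v) :=
  ⟨pairing_add v, pairing_smul v⟩

lemma exists_pairing_eq_intCast {d : ℕ} (v : Fin d → ℤ) {x : Fin d → ℝ}
    (hx : x ∈ latticePoints d) : ∃ z : ℤ, pairing v x = z := by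
  choose zx hzx using hx
  exact ⟨∑ j, v j * zx j, by simp [pairing, hzx]⟩

lemma smul_setOf_pairing_ge {d m : ℕ} (n : Fin m → Fin d → ℤ) (h : Fin m → ℤ)
    {c : ℝ} (hc : 0 < c) :
    c • {x | ∀ i, pairing (n i) x ≥ -(h i : ℝ)} =
      {x | ∀ i, pairing (n i) x ≥ -(c * h i)} := by
  ext x
  rw [mem_smul_set_iff_inv_smul_mem₀ hc.ne']
  simp only [mem_ofPred_eq, pairing_smul, ge_iff_le, le_inv_mul_iff₀ hc, mul_neg]

lemma mem_of_floorPoly_eq_singleton {d : ℕ} {R : Set (Fin d → ℝ)} {u : Fin d → ℝ}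
    (hu : floorPoly R = {u}) (hR : (interior R ∩ latticePoints d).Nonempty) :
    u ∈ interior R ∩ latticePoints d := by
  obtain ⟨w, hw⟩ := hR
  have hwu : w ∈ floorPoly R := subset_convexHull ℝ _ hw
  rw [hu, mem_singleton_iff] at hwu
  rwa [← hwu]

lemma ne_zero_of_gcd_eq_one {d : ℕ} {v : Fin d → ℤ} (hv : Finset.univ.gcd v = 1) : v ≠ 0 := by
  rintro rfl
  exact one_ne_zero (hv.symm.trans (Finset.gcd_eq_zero_iff.mpr fun _ _ => rfl))

lemma pairing_pos_of_ne_zero {d : ℕ} {v : Fin d → ℤ} (hv : v ≠ 0) :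
    0 < pairing v (fun j => (v j : ℝ)) := by
  obtain ⟨j, hj⟩ := Function.ne_iff.mp hv
  refine Finset.sum_pos' (fun k _ => mul_self_nonneg _) ⟨j, Finset.mem_univ j, ?_⟩
  exact mul_self_pos.mpr (Int.cast_ne_zero.mpr hj)

/-- Moving from `x` against the normal `v` stays in `S` for a short time, and strictly decreases
`pairing v`. -/
lemma lt_pairing_of_mem_interior {d : ℕ} {v : Fin d → ℤ} (hv : v ≠ 0) {S : Set (Fin d → ℝ)}
    {c : ℝ} (hS : ∀ y ∈ S, c ≤ pairing v y) {x : Fin d → ℝ} (hx : x ∈ interior S) :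
    c < pairing v x := by
  set w : Fin d → ℝ := fun j => (v j : ℝ)
  have hpath : ∀ᶠ t in 𝓝 (0 : ℝ), x - t • w ∈ S := by
    have hcont : Continuous fun t : ℝ => x - t • w := by fun_prop
    exact hcont.continuousAt.preimage_mem_nhds (by simpa using mem_interior_iff_mem_nhds.mp hx)
  obtain ⟨t, hxt, ht⟩ := ((hpath.filter_mono nhdsWithin_le_nhds).and
    (self_mem_nhdsWithin : Ioi (0 : ℝ) ∈ 𝓝[>] 0)).exists
  have := hS _ hxt
  rw [pairing_sub, pairing_smul] at this
  nlinarith [pairing_pos_of_ne_zero hv, ht]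

lemma exists_pairing_eq_of_pairing_lt {d m : ℕ} {n : Fin m → Fin d → ℤ} {h : Fin m → ℤ}
    {i : Fin m} {q x : Fin d → ℝ} (hq : ∀ j, pairing (n j) q ≥ -(h j : ℝ))
    (hx : pairing (n i) x < -(h i : ℝ)) (hxj : ∀ j, j ≠ i → pairing (n j) x ≥ -(h j : ℝ)) :
    ∃ p, (∀ j, pairing (n j) p ≥ -(h j : ℝ)) ∧ pairing (n i) p = -(h i : ℝ) := by
  let f := (isLinearMap_pairing (n i)).mk'.toAffineMap
  have hmem : -(h i : ℝ) ∈ f '' segment ℝ q x := by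
    rw [image_segment, segment_symm]
    exact Icc_subset_segment ⟨hx.le, hq i⟩
  obtain ⟨p, hp, hpi⟩ := hmem
  have hother : segment ℝ q x ⊆ {y | ∀ j, j ≠ i → pairing (n j) y ≥ -(h j : ℝ)} := by
    have hconv : Convex ℝ {y | ∀ j, j ≠ i → pairing (n j) y ≥ -(h j : ℝ)} := by
      simp only [ofPred_forall]
      exact convex_iInter fun j => convex_iInter fun _ =>
        convex_halfSpace_ge (isLinearMap_pairing (n j)) _
    refine hconv.segment_subset ?_ ?_
    · simpa using fun j _ => hq j
    · simpa using hxj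
  refine ⟨p, fun j => ?_, hpi⟩
  by_cases hji : j = i
  · subst hji; exact hpi.ge
  · exact hother hp j hji

lemma pairing_le_of_eq_singleton_add_remPoly {d m : ℕ} {n : Fin m → Fin d → ℤ} {h : Fin m → ℤ}
    {a : ℕ} {P : Set (Fin d → ℝ)} {u p : Fin d → ℝ} (hdecomp : P = {u} + remPoly n h a)
    (hp : p ∈ P) {i : Fin m} (hpi : pairing (n i) p = -(h i : ℝ)) :
    pairing (n i) u ≤ 1 - (a : ℝ) * h i := by
  rw [hdecomp, singleton_add] at hp
  obtain ⟨r, hr, rfl⟩ := hp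
  have hrem : remPoly n h a ⊆ {x | pairing (n i) x ≥ ((a : ℝ) - 1) * h i - 1} :=
    convexHull_min (fun x hx => hx.2 i) (convex_halfSpace_ge (isLinearMap_pairing (n i)) _)
  have := hrem hr
  rw [pairing_add] at hpi
  simp only [mem_ofPred_eq] at this
  linarith

lemma image_sub_setOf_pairing_ge {d m : ℕ} (n : Fin m → Fin d → ℤ) (b : Fin m → ℝ)
    (u : Fin d → ℝ) :
    (fun x => x - u) '' {x | ∀ i, pairing (n i) x ≥ b i} =
      {z | ∀ i, pairing (n i) z ≥ b i - pairing (n i) u} := by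
  ext z
  constructor
  · rintro ⟨x, hx, rfl⟩ i
    rw [pairing_sub]
    linarith [hx i]
  · intro hz
    refine ⟨z + u, fun i => ?_, add_sub_cancel_right z u⟩
    rw [pairing_add]
    linarith [hz i]

lemma IsLatticePolytope.image_sub_smul {d : ℕ} {P : Set (Fin d → ℝ)} (hP : IsLatticePolytope P)
    (k : ℕ) {w : Fin d → ℝ} (hw : w ∈ latticePoints d) :
    IsLatticePolytope ((fun x => x - w) '' ((k : ℝ) • P)) := by
  obtain ⟨V, hV, rfl⟩ := hP
  let F : (Fin d → ℝ) →ᵃ[ℝ] (Fin d → ℝ) :=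
    ((k : ℝ) • LinearMap.id).toAffineMap - AffineMap.const ℝ _ w
  have hF : ∀ x, F x = (k : ℝ) • x - w := fun x => rfl
  refine ⟨V.image F, ?_, ?_⟩
  · intro x hx
    obtain ⟨v, hv, rfl⟩ := Finset.mem_image.mp hx
    intro j
    obtain ⟨zv, hzv⟩ := hV hv j
    obtain ⟨zw, hzw⟩ := hw j
    exact ⟨k * zv - zw, by simp [hF, hzv, hzw]⟩
  · rw [Finset.coe_image, ← AffineMap.image_convexHull, ← image_smul, image_image]
    rfl

lemma convex_polarDual {d : ℕ} (Q : Set (Fin d → ℝ)) : Convex ℝ (polarDual Q) := by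
  simp only [polarDual, ofPred_forall]
  exact convex_iInter fun x => convex_iInter fun _ =>
    convex_halfSpace_ge ⟨fun y y' => add_dotProduct y y' x, fun c y => smul_dotProduct c y x⟩ _

lemma polarDual_setOf_dotProduct_ge {d m : ℕ} (w : Fin m → Fin d → ℝ) :
    polarDual {z | ∀ i, w i ⬝ᵥ z ≥ -1} = convexHull ℝ (insert 0 (range w)) := by
  refine Subset.antisymm (fun y hy => ?_) (convexHull_min ?_ (convex_polarDual _))
  · by_contra hyK
    obtain ⟨f, c, hfK, hfy⟩ := geometric_hahn_banach_closed_point (convex_convexHull ℝ _)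
      (((finite_range w).insert 0).isCompact_convexHull (𝕜 := ℝ)).isClosed hyK
    have hc : 0 < c := by
      simpa using hfK 0 (subset_convexHull ℝ _ (mem_insert 0 _))
    set g : Fin d → ℝ := fun j => f fun k => if j = k then 1 else 0
    have hfg : ∀ v, f v = v ⬝ᵥ g := fun v => by
      simpa [dotProduct, g] using LinearMap.pi_apply_eq_sum_univ (f : (Fin d → ℝ) →ₗ[ℝ] ℝ) v
    have hz : ∀ v, v ⬝ᵥ (-c⁻¹ • g) = -(f v / c) := fun v => by
      rw [dotProduct_smul, hfg, smul_eq_mul]; ring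
    have hzQ : -c⁻¹ • g ∈ {z | ∀ i, w i ⬝ᵥ z ≥ -1} := fun i => by
      have := hfK (w i) (subset_convexHull ℝ _ (mem_insert_of_mem 0 (mem_range_self i)))
      rw [hz, ge_iff_le, neg_le_neg_iff, div_le_one hc]
      exact this.le
    have := hy _ hzQ
    rw [show ∑ i, y i * (-c⁻¹ • g) i = y ⬝ᵥ (-c⁻¹ • g) from rfl, hz, ge_iff_le,
      neg_le_neg_iff, div_le_one hc] at this
    exact absurd hfy this.not_gt
  · rintro _ (rfl | ⟨i, rfl⟩) x hx
    · simp
    · exact hx i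

lemma isLatticePolytope_polarDual_setOf_pairing_ge {d m : ℕ} (n : Fin m → Fin d → ℤ) :
    IsLatticePolytope (polarDual {z | ∀ i, pairing (n i) z ≥ -1}) := by
  refine ⟨insert 0 (Finset.univ.image fun i j => (n i j : ℝ)), ?_, ?_⟩
  · rintro _ hx
    rw [Finset.coe_insert, Finset.coe_image, Finset.coe_univ, image_univ] at hx
    rcases hx with rfl | ⟨i, rfl⟩
    · exact fun _ => ⟨0, by simp⟩
    · exact fun j => ⟨n i j, rfl⟩
  · rw [Finset.coe_insert, Finset.coe_image, Finset.coe_univ, image_univ]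
    exact polarDual_setOf_dotProduct_ge fun i j => (n i j : ℝ)

lemma zero_mem_interior_image_sub {d : ℕ} {S : Set (Fin d → ℝ)} {u : Fin d → ℝ}
    (hu : u ∈ interior S) : (0 : Fin d → ℝ) ∈ interior ((fun x => x - u) '' S) := by
  rw [show (fun x => x - u) = Homeomorph.subRight u from rfl, ← Homeomorph.image_interior]
  exact ⟨u, hu, sub_self u⟩

namespace IsFacetPresentation

variable {d m : ℕ} {P : Set (Fin d → ℝ)} {n : Fin m → Fin d → ℤ} {h : Fin m → ℤ}

lemma smul_eq (hpres : IsFacetPresentation P n h) {c : ℝ} (hc : 0 < c) :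
    c • P = {x | ∀ i, pairing (n i) x ≥ -(c * h i)} := by
  rw [hpres.1, smul_setOf_pairing_ge n h hc]

lemma exists_mem_pairing_eq (hpres : IsFacetPresentation P n h) (hne : P.Nonempty) (i : Fin m) :
    ∃ p ∈ P, pairing (n i) p = -(h i : ℝ) := by
  obtain ⟨q, hq⟩ := hne
  obtain ⟨x, hx, hxj⟩ := hpres.2.2 i
  rw [hpres.1] at hq ⊢
  exact exists_pairing_eq_of_pairing_lt hq hx hxj

/-- `pairing (n i) u` is an integer in `(-a h_i, 1 - a h_i]`. -/
lemma pairing_eq_one_sub (hpres : IsFacetPresentation P n h) (hne : P.Nonempty) {a : ℕ}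
    (ha : 0 < (a : ℝ)) {u : Fin d → ℝ} (hdecomp : P = {u} + remPoly n h a)
    (hu_int : u ∈ interior ((a : ℝ) • P)) (hu_lat : u ∈ latticePoints d) (i : Fin m) :
    pairing (n i) u = 1 - (a : ℝ) * h i := by
  obtain ⟨p, hp, hpi⟩ := hpres.exists_mem_pairing_eq hne i
  have hupper := pairing_le_of_eq_singleton_add_remPoly hdecomp hp hpi
  have hlower : -((a : ℝ) * h i) < pairing (n i) u := by
    refine lt_pairing_of_mem_interior (ne_zero_of_gcd_eq_one (hpres.2.1 i)) (fun y hy => ?_) hu_int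
    rw [hpres.smul_eq ha] at hy
    exact hy i
  obtain ⟨z, hz⟩ := exists_pairing_eq_intCast (n i) hu_lat
  rw [hz] at hupper hlower ⊢
  have hupper' : z ≤ 1 - a * h i := by exact_mod_cast hupper
  have hlower' : -(a * h i) < z := by exact_mod_cast hlower
  rw [show z = 1 - a * h i by omega]
  push_cast
  ring

end IsFacetPresentation

theorem stmt_15_general {d : ℕ} (P : Set (Fin d → ℝ))
    (hP : IsLatticePolytope P) (hfull : (interior P).Nonempty)
    {m : ℕ} (n : Fin m → Fin d → ℤ) (h : Fin m → ℤ)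
    (hpres : IsFacetPresentation P n h)
    (a : ℕ) (ha : IsCodegree P a)
    (hdecomp : P = floorPoly ((a : ℝ) • P) + remPoly n h a)
    (u : Fin d → ℝ) (hu : floorPoly ((a : ℝ) • P) = {u}) :
    IsReflexive ((fun x => x - u) '' ((a : ℝ) • P)) ∧ IsGorenstein P := by
  obtain ⟨ha1, hane, -⟩ := ha
  have haR : (0 : ℝ) < a := by exact_mod_cast ha1
  obtain ⟨hu_int, hu_lat⟩ := mem_of_floorPoly_eq_singleton hu hane
  have hdist := hpres.pairing_eq_one_sub (hfull.mono interior_subset) haR (hu ▸ hdecomp)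
    hu_int hu_lat
  have hQ : (fun x => x - u) '' ((a : ℝ) • P) = {z | ∀ i, pairing (n i) z ≥ -1} := by
    have hshift : ∀ i, -((a : ℝ) * h i) - pairing (n i) u = -1 := fun i => by
      rw [hdist]; ring
    rw [hpres.smul_eq haR, image_sub_setOf_pairing_ge]
    simp only [hshift]
  have hrefl : IsReflexive ((fun x => x - u) '' ((a : ℝ) • P)) :=
    ⟨hP.image_sub_smul a hu_lat, zero_mem_interior_image_sub hu_int,
      hQ ▸ isLatticePolytope_polarDual_setOf_pairing_ge n⟩
  exact ⟨hrefl, a, u, ha1, hu_lat, hrefl⟩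

theorem stmt_15 {d : ℕ} (hd : 1 ≤ d) (P : Set (Fin d → ℝ))
    (hP : IsLatticePolytope P) (hfull : (interior P).Nonempty)
    {m : ℕ} (n : Fin m → Fin d → ℤ) (h : Fin m → ℤ)
    (hpres : IsFacetPresentation P n h)
    (a : ℕ) (ha : IsCodegree P a)
    (hdecomp : P = floorPoly ((a : ℝ) • P) + remPoly n h a)
    (u : Fin d → ℝ) (hu : floorPoly ((a : ℝ) • P) = {u}) :
    IsReflexive ((fun x => x - u) '' ((a : ℝ) • P)) ∧ IsGorenstein P :=
  stmt_15_general P hP hfull n h hpres a ha hdecomp u hu
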